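/- arXiv:2205.00983 — 3 statements merged into one kernel-verified Lean document; each statement's English description precedes it below -/
import Mathlib

section
/- If G : C ⥤ D is a discrete opfibration and D satisfies property (G2) (all posets |d/D| are Noetherian), then C satisfies property (G2). -/
/-! A discrete opfibration reflects factorizations: if `G g` factors through `G f` via some `h`,
lift `h` from the codomain of `f`; composing with `f` gives a lift of `G g` from the common
source, so by uniqueness of lifts it is `g` itself. Hence an increasing pair of the image
sequence in `|G c / D|` is already an increasing pair in `|c / C|`. -/

open CategoryTheory

def DiscreteOpfibration {C : Type*} [Category C] {D : Type*} [Category D] (G : C ⥤ D) : Prop :=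
  ∀ (c : C) (d : D) (g : G.obj c ⟶ d),
    ∃! fp : Σ c' : C, c ⟶ c', ∃ h : G.obj fp.1 = d, G.map fp.2 ≫ eqToHom h = g

/-- Property (G2): for every object `c`, the poset `|c/C|` (the poset quotient of the preorder
`f ≤ g ↔ ∃ h, f ≫ h = g` on morphisms out of `c`) is Noetherian, i.e. every sequence of
morphisms out of `c` contains an increasing pair. -/
def PropertyG2 (C : Type*) [Category C] : Prop :=
  ∀ (c : C) (x : ℕ → Σ c' : C, (c ⟶ c')),
    ∃ i j : ℕ, i < j ∧ ∃ h : (x i).1 ⟶ (x j).1, (x i).2 ≫ h = (x j).2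

namespace DiscreteOpfibration

variable {C : Type*} [Category C] {D : Type*} [Category D] {G : C ⥤ D}

theorem sigma_eq_of_map_eq (hG : DiscreteOpfibration G) {c : C} {p q : Σ c' : C, c ⟶ c'}
    (hobj : G.obj p.1 = G.obj q.1) (hmap : G.map p.2 ≫ eqToHom hobj = G.map q.2) : p = q := by
  obtain ⟨r, -, hunique⟩ := hG c (G.obj q.1) (G.map q.2)
  exact (hunique p ⟨hobj, hmap⟩).trans (hunique q ⟨rfl, by simp⟩).symm

theorem exists_comp_eq_of_map_comp_eq (hG : DiscreteOpfibration G) {c a b : C}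
    (f : c ⟶ a) (g : c ⟶ b) (h : G.obj a ⟶ G.obj b) (w : G.map f ≫ h = G.map g) :
    ∃ k : a ⟶ b, f ≫ k = g := by
  obtain ⟨⟨b', k⟩, ⟨hobj, hk⟩, -⟩ := hG a (G.obj b) h
  have hlift : (⟨b', f ≫ k⟩ : Σ c' : C, c ⟶ c') = ⟨b, g⟩ :=
    hG.sigma_eq_of_map_eq hobj (by rw [G.map_comp, Category.assoc, hk, w])
  obtain ⟨rfl, hfg⟩ := Sigma.mk.inj_iff.mp hlift
  exact ⟨k, eq_of_heq hfg⟩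

end DiscreteOpfibration

/-- If `G : C ⥤ D` is a discrete opfibration and `D` satisfies property (G2),
then `C` satisfies property (G2). -/
theorem propertyG2_of_discreteOpfibration {C : Type*} [Category C] {D : Type*} [Category D]
    (G : C ⥤ D) (hG : DiscreteOpfibration G) (hD : PropertyG2 D) : PropertyG2 C := by
  intro c x
  obtain ⟨i, j, hij, h, w⟩ := hD (G.obj c) fun n => ⟨G.obj (x n).1, G.map (x n).2⟩
  exact ⟨i, j, hij, hG.exists_comp_eq_of_map_comp_eq (x i).2 (x j).2 h w⟩
end

section
/- Let G : A ⥤ B be a discrete opfibration and Φ : D ⥤ B a functor satisfying property (F). Then the projection functor Φ' : D ×_B A ⥤ A from the pullback category satisfies property (F). -/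
open CategoryTheory

variable {D : Type*} [Category D] {A : Type*} [Category A] {B : Type*} [Category B]

/-- The pullback (fibered product) category `D ×_B A` of `Φ : D ⥤ B` and `G : A ⥤ B`:
objects are pairs `(d, a)` with `Φ.obj d = G.obj a`. -/
structure PullbackCat (Φ : D ⥤ B) (G : A ⥤ B) where
  d : D
  a : A
  eq : Φ.obj d = G.obj a

/-- A morphism in the pullback category: a pair of morphisms with equal images in `B`. -/
@[ext]
structure PullbackCatHom {Φ : D ⥤ B} {G : A ⥤ B} (x y : PullbackCat Φ G) where
  u : x.d ⟶ y.d
  v : x.a ⟶ y.a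
  comm : Φ.map u ≫ eqToHom y.eq = eqToHom x.eq ≫ G.map v

instance (Φ : D ⥤ B) (G : A ⥤ B) : Category (PullbackCat Φ G) where
  Hom := PullbackCatHom
  id x := ⟨𝟙 x.d, 𝟙 x.a, by simp⟩
  comp f g := ⟨f.u ≫ g.u, f.v ≫ g.v, by
    rw [Functor.map_comp, Functor.map_comp, Category.assoc, g.comm, ← Category.assoc,
      f.comm, Category.assoc]⟩

/-- The projection from the pullback category to `D`. -/
def pullbackFst (Φ : D ⥤ B) (G : A ⥤ B) : PullbackCat Φ G ⥤ D where
  obj x := x.d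
  map f := f.u

/-- The projection from the pullback category to `A`. -/
def pullbackSnd (Φ : D ⥤ B) (G : A ⥤ B) : PullbackCat Φ G ⥤ A where
  obj x := x.a
  map f := f.v

def PropertyF {C : Type*} [Category C] {E : Type*} [Category E] (F : C ⥤ E) : Prop :=
  ∀ e : E, ∃ (n : ℕ) (c : Fin n → C) (f : ∀ i, e ⟶ F.obj (c i)),
    ∀ (c' : C) (g : e ⟶ F.obj c'), ∃ (i : Fin n) (h : c i ⟶ c'), g = f i ≫ F.map h

namespace DiscreteOpfibration

variable {C : Type*} [Category C] {E : Type*} [Category E] {G : C ⥤ E}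

theorem exists_lift (hG : DiscreteOpfibration G) (a : C) {b : E} (g : G.obj a ⟶ b) :
    ∃ (a' : C) (u : a ⟶ a') (h : G.obj a' = b), G.map u ≫ eqToHom h = g :=
  let ⟨⟨a', u⟩, ⟨h, hu⟩, _⟩ := hG a b g
  ⟨a', u, h, hu⟩

theorem eq_of_map_eq (hG : DiscreteOpfibration G) {a a₁ a₂ : C} (u₁ : a ⟶ a₁) (u₂ : a ⟶ a₂)
    (h : G.obj a₁ = G.obj a₂) (hu : G.map u₁ ≫ eqToHom h = G.map u₂) :
    ∃ e : a₁ = a₂, u₁ ≫ eqToHom e = u₂ := by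
  obtain ⟨_, -, unique⟩ := hG a _ (G.map u₂)
  have hsigma : (⟨a₁, u₁⟩ : Σ c, a ⟶ c) = ⟨a₂, u₂⟩ :=
    (unique ⟨a₁, u₁⟩ ⟨h, hu⟩).trans (unique ⟨a₂, u₂⟩ ⟨rfl, by simp⟩).symm
  obtain ⟨e, hu⟩ := Sigma.mk.inj_iff.mp hsigma
  subst e
  exact ⟨rfl, by simpa using eq_of_heq hu⟩

end DiscreteOpfibration

/-- Lifting `k` from `x.a` gives `w : x.a ⟶ a''`; then `u ≫ w` and `g` lie over the same morphism
of `B`, so uniqueness of lifts forces `a'' = y.a` and `u ≫ w = g`. -/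
theorem DiscreteOpfibration.exists_pullbackCatHom_factor {Φ : D ⥤ B} {G : A ⥤ B}
    (hG : DiscreteOpfibration G) {a : A} {x y : PullbackCat Φ G} (u : a ⟶ x.a) (g : a ⟶ y.a)
    (k : x.d ⟶ y.d)
    (hk : G.map g ≫ eqToHom y.eq.symm = (G.map u ≫ eqToHom x.eq.symm) ≫ Φ.map k) :
    ∃ h : x ⟶ y, g = u ≫ (pullbackSnd Φ G).map h := by
  obtain ⟨a'', w, hw, hwk⟩ := hG.exists_lift x.a (eqToHom x.eq.symm ≫ Φ.map k ≫ eqToHom y.eq)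
  obtain ⟨rfl, hwg⟩ := hG.eq_of_map_eq (u ≫ w) g hw <| by
    rw [Functor.map_comp, Category.assoc, hwk]
    simpa using congrArg (· ≫ eqToHom y.eq) hk.symm
  refine ⟨⟨k, w, ?_⟩, (by simpa using hwg : u ≫ w = g).symm⟩
  simp only [eqToHom_refl, Category.comp_id] at hwk
  simp [hwk]

/-- If `G : A ⥤ B` is a discrete opfibration and `Φ : D ⥤ B` satisfies property (F),
then the projection `Φ' : D ×_B A ⥤ A` satisfies property (F). -/
theorem pullback_propertyF (Φ : D ⥤ B) (G : A ⥤ B)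
    (hG : DiscreteOpfibration G) (hΦ : PropertyF Φ) : PropertyF (pullbackSnd Φ G) := by
  intro a
  obtain ⟨n, d, f, hf⟩ := hΦ (G.obj a)
  choose a' u h hu using fun i => hG.exists_lift a (f i)
  refine ⟨n, fun i => ⟨d i, a' i, (h i).symm⟩, u, ?_⟩
  intro y g
  obtain ⟨i, k, hk⟩ := hf y.d (G.map g ≫ eqToHom y.eq.symm)
  refine ⟨i, hG.exists_pullbackCatHom_factor (x := ⟨d i, a' i, (h i).symm⟩) (u i) g k ?_⟩
  rw [hu i]
  exact hk
end

section
/- The opposite of the category gOS of graded ordered surjections satisfies property (G2): for every object, the poset |x / gOS^op| is Noetherian. -/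
/-!
Encode a surjection `u : {1,…,m} → {1,…,n}` as the word over the finite alphabet
`{1,…,n} × Bool` whose `k`-th letter is `(u k, k is the least element of its fibre)`. If the
word of `u` embeds as a subword into the word of `v`, the embedding `φ` sends fibre minima to
fibre minima, and sending `k` to the largest `t` with `φ t ≤ k` and `u t = v k` is an ordered
surjection `h` with `v = u ∘ h`. Higman's lemma for these words together with Dickson's lemma
for the gradings `{1,…,n} → ℕ` yields `i < j` with such a factorisation and `g i ≤ g j`
pointwise; the difference `g j - g i` is then realised by a grading supported on one point of
each fibre of `f i`.
-/

/-- An ordered surjection `f : Fin n → Fin m`: a surjective map such that the minima of the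
fibers are strictly increasing, i.e. for `i < j` the minimum of `f⁻¹(i)` is smaller than every
element of `f⁻¹(j)`. -/
def OrderedSurj {n m : ℕ} (f : Fin n → Fin m) : Prop :=
  Function.Surjective f ∧
    ∀ i j : Fin m, i < j → ∃ a : Fin n, f a = i ∧ ∀ b : Fin n, f b = j → a < b

open Function

theorem List.wellQuasiOrdered_sublist {α : Type*} [Finite α] :
    WellQuasiOrdered (List.Sublist : List α → List α → Prop) := by
  have higman := Set.PartiallyWellOrderedOn.partiallyWellOrderedOn_sublistForall₂ (· = ·)
    (Set.partiallyWellOrderedOn_univ_iff.2 (Finite.wellQuasiOrdered (α := α) (· = ·)))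
  simp only [Set.mem_univ, implies_true, Set.ofPred_true,
    Set.partiallyWellOrderedOn_univ_iff] at higman
  intro F
  obtain ⟨i, j, hij, hF⟩ := higman F
  obtain ⟨l, hl, hsub⟩ := List.sublistForall₂_iff.1 hF
  rw [List.forall₂_eq_eq_eq] at hl
  exact ⟨i, j, hij, hl ▸ hsub⟩

theorem Function.Surjective.exists_sum_fiber_eq {α β M : Type*} [Fintype α] [DecidableEq β]
    [AddCommMonoid M] {f : α → β} (hf : Surjective f) (d : β → M) :
    ∃ w : α → M, ∀ b, ∑ a ∈ Finset.univ.filter (fun a ↦ f a = b), w a = d b := by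
  classical
  refine ⟨fun a ↦ if a = surjInv hf (f a) then d (f a) else 0, fun b ↦ ?_⟩
  calc ∑ a ∈ Finset.univ.filter (fun a ↦ f a = b), (if a = surjInv hf (f a) then d (f a) else 0)
      = ∑ a ∈ Finset.univ.filter (fun a ↦ f a = b), (if a = surjInv hf b then d b else 0) :=
        Finset.sum_congr rfl fun a ha ↦ by rw [(Finset.mem_filter.1 ha).2]
    _ = d b := by simp [Finset.sum_ite_eq', surjInv_eq hf]

section FiberMin

variable {α : Type*} {m m' : ℕ}

def IsFiberMin (u : Fin m → α) (k : Fin m) : Prop := ∀ k', u k' = u k → k ≤ k'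

instance [DecidableEq α] (u : Fin m → α) : DecidablePred (IsFiberMin u) :=
  fun _ ↦ Fintype.decidableForallFintype

theorem Function.Surjective.exists_isFiberMin {u : Fin m → α} (hu : Surjective u) (a : α) :
    ∃ p, u p = a ∧ IsFiberMin u p := by
  obtain ⟨p, hp, hmin⟩ := wellFounded_lt.has_min {k | u k = a} (hu a)
  exact ⟨p, hp, fun k hk ↦ not_lt.1 (hmin k (hk.trans hp))⟩

def fiberMinCode [DecidableEq α] (u : Fin m → α) : List (α × Bool) :=
  List.ofFn fun k ↦ (u k, decide (IsFiberMin u k))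

theorem exists_strictMono_of_fiberMinCode_sublist [DecidableEq α] {u : Fin m → α}
    {v : Fin m' → α} (h : (fiberMinCode u).Sublist (fiberMinCode v)) :
    ∃ φ : Fin m → Fin m', StrictMono φ ∧
      ∀ t, v (φ t) = u t ∧ (IsFiberMin v (φ t) ↔ IsFiberMin u t) := by
  obtain ⟨e, he⟩ := List.sublist_iff_exists_fin_orderEmbedding_get_eq.1 h
  let φ t := Fin.cast List.length_ofFn (e (Fin.cast (List.length_ofFn).symm t))
  refine ⟨φ, fun a b hab ↦ e.strictMono hab, fun t ↦ ?_⟩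
  have := he (Fin.cast (List.length_ofFn).symm t)
  simp only [fiberMinCode, List.get_ofFn, Prod.mk.injEq, decide_eq_decide] at this
  exact ⟨this.1.symm, this.2.symm⟩

theorem orderedSurj_of_strictMono_leftInverse {h : Fin m' → Fin m} {φ : Fin m → Fin m'}
    (hφ : StrictMono φ) (hinv : LeftInverse h φ) (hle : ∀ k, φ (h k) ≤ k) : OrderedSurj h :=
  ⟨hinv.surjective, fun t _ htt' ↦
    ⟨φ t, hinv t, fun k hk ↦ (hφ htt').trans_le (hk ▸ hle k)⟩⟩

theorem exists_orderedSurj_comp_eq_of_strictMono {u : Fin m → α} {v : Fin m' → α}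
    (hu : Surjective u) {φ : Fin m → Fin m'} (hφ : StrictMono φ) (hvφ : ∀ t, v (φ t) = u t)
    (hmin : ∀ t, IsFiberMin u t → IsFiberMin v (φ t)) :
    ∃ h : Fin m' → Fin m, OrderedSurj h ∧ ∀ k, v k = u (h k) := by
  classical
  have hS : ∀ k, ∃ t, (φ t ≤ k ∧ u t = v k) ∧ ∀ t', φ t' ≤ k ∧ u t' = v k → t' ≤ t := by
    intro k
    obtain ⟨p, hp, hpmin⟩ := hu.exists_isFiberMin (v k)
    have hne : (Finset.univ.filter fun t ↦ φ t ≤ k ∧ u t = v k).Nonempty :=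
      ⟨p, by simpa [hp] using hmin p hpmin k (by rw [hvφ, hp])⟩
    obtain ⟨t, ht, hmax⟩ := Finset.exists_max_image _ id hne
    exact ⟨t, by simpa using ht, fun t' ht' ↦ hmax t' (by simpa using ht')⟩
  choose h hh hmax using hS
  have hinv : LeftInverse h φ := fun t ↦
    le_antisymm (hφ.le_iff_le.1 (hh (φ t)).1) (hmax _ t ⟨le_rfl, (hvφ t).symm⟩)
  exact ⟨h, orderedSurj_of_strictMono_leftInverse hφ hinv fun k ↦ (hh k).1,
    fun k ↦ (hh k).2.symm⟩

theorem exists_orderedSurj_comp_eq_of_fiberMinCode_sublist [DecidableEq α] {u : Fin m → α}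
    {v : Fin m' → α} (hu : Surjective u) (hcode : (fiberMinCode u).Sublist (fiberMinCode v)) :
    ∃ h : Fin m' → Fin m, OrderedSurj h ∧ ∀ k, v k = u (h k) := by
  obtain ⟨φ, hφ, hφv⟩ := exists_strictMono_of_fiberMinCode_sublist hcode
  exact exists_orderedSurj_comp_eq_of_strictMono hu hφ (fun t ↦ (hφv t).1)
    fun t ↦ (hφv t).2.2

end FiberMin

/-- The opposite of the category `gOS` of graded ordered surjections satisfies property (G2):
for every object `n` of `gOS`, any sequence of graded ordered surjections `(fᵢ, gᵢ)` into
`{1,…,n}` (i.e. morphisms out of `n` in `gOSᵒᵖ`) contains indices `i < j` such that the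
`j`-th morphism factors through the `i`-th one in `gOS` by a graded ordered surjection
`(h, gₕ)`, where the grading of the composite is `g_{f∘h}(x) = g_f(x) + Σ_{y ∈ f⁻¹(x)} gₕ(y)`. -/
theorem gOS_op_propertyG2 (n : ℕ) (m : ℕ → ℕ)
    (f : ∀ i : ℕ, Fin (m i) → Fin n) (hf : ∀ i, OrderedSurj (f i))
    (g : ℕ → Fin n → ℕ) :
    ∃ i j : ℕ, i < j ∧
      ∃ (h : Fin (m j) → Fin (m i)) (gh : Fin (m i) → ℕ),
        OrderedSurj h ∧ (∀ x : Fin (m j), f j x = f i (h x)) ∧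
        (∀ x : Fin n,
          g j x = g i x + ∑ y ∈ Finset.univ.filter (fun y => f i y = x), gh y) := by
  obtain ⟨i, j, hij, hg, hcode⟩ := (wellQuasiOrdered_le.prod List.wellQuasiOrdered_sublist)
    fun i ↦ (g i, fiberMinCode (f i))
  obtain ⟨h, hOS, hfac⟩ := exists_orderedSurj_comp_eq_of_fiberMinCode_sublist (hf i).1 hcode
  obtain ⟨gh, hgh⟩ := (hf i).1.exists_sum_fiber_eq (g j - g i)
  refine ⟨i, j, hij, h, gh, hOS, hfac, fun x ↦ ?_⟩
  rw [hgh x, Pi.sub_apply, Nat.add_sub_cancel' (hg x)]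
end
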